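/- arXiv:2108.04287 — 3 statements merged into one kernel-verified Lean document; each statement's English description precedes it below -/
import Mathlib

section
/- Let d ≥ 2, p ∈ (1/d, 1), q = (d·p - 1)/(p·(d-1)), θ = q, α = 1/d. For any subset S₁ of a (d-1)-element set and any distinguished element j not in S₁, the expression (θ/d)·α^{|S₁|}·(1-α)^{d-1-|S₁|} equals p·q·(p·(1-q))^{|S₁|}·(1-p)^{d-1-|S₁|} / (d·p·q·(p·(1-q)+(1-p))^{d-1} + (p·(1-q)+(1-p))^{d}). -/
theorem stmt_14 (d : ℕ) (hd : 2 ≤ d) (p : ℝ) (hp : 1 / d < p) (hp1 : p < 1)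
    (q θ α : ℝ) (hq : q = (d * p - 1) / (p * (d - 1))) (hθ : θ = q) (hα : α = 1 / d) :
    ∀ k : ℕ, k ≤ d - 1 →
      θ / d * α ^ k * (1 - α) ^ (d - 1 - k)
        = p * q * (p * (1 - q)) ^ k * (1 - p) ^ (d - 1 - k) /
            (d * p * q * (p * (1 - q) + (1 - p)) ^ (d - 1)
              + (p * (1 - q) + (1 - p)) ^ d) := by
  subst hθ hα
  intro k hk
  obtain ⟨m, rfl⟩ : ∃ m, d = k + m + 1 := ⟨d - 1 - k, by omega⟩
  simp only [Nat.add_sub_cancel, Nat.add_sub_cancel_left] at hk hq ⊢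
  have hm : 1 ≤ k + m := by omega
  set D : ℝ := ((k + m + 1 : ℕ) : ℝ) with hD
  have hDval : D = (k : ℝ) + m + 1 := by push_cast [hD]; ring
  have hD1 : D - 1 = (k : ℝ) + m := by rw [hDval]; ring
  have hDpos : 0 < D := by rw [hDval]; positivity
  have hD1pos : 0 < D - 1 := by
    rw [hD1]
    have : (1 : ℝ) ≤ (k : ℝ) + m := by exact_mod_cast hm
    linarith
  have hDne : D ≠ 0 := ne_of_gt hDpos
  have hD1ne : D - 1 ≠ 0 := ne_of_gt hD1pos
  have hp0 : 0 < p := lt_trans (by positivity) hp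
  have hpne : p ≠ 0 := ne_of_gt hp0
  have h1p : 0 < 1 - p := by linarith
  have h1pne : (1 : ℝ) - p ≠ 0 := ne_of_gt h1p
  have hB : p * (1 - θ) = (1 - p) / (D - 1) := by
    rw [hq]; field_simp; ring
  have hA : p * (1 - θ) + (1 - p) = (1 - p) * D / (D - 1) := by
    rw [hB]; field_simp; ring
  have hDq : D * p * θ + (1 - p) * D / (D - 1) = D * p := by
    rw [hq]; field_simp; ring
  have hden : D * p * θ * (p * (1 - θ) + (1 - p)) ^ (k + m)
      + (p * (1 - θ) + (1 - p)) ^ (k + m + 1)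
      = D * p * ((1 - p) * D / (D - 1)) ^ (k + m) := by
    rw [hA, pow_succ]
    calc D * p * θ * ((1 - p) * D / (D - 1)) ^ (k + m)
        + ((1 - p) * D / (D - 1)) ^ (k + m) * ((1 - p) * D / (D - 1))
        = ((1 - p) * D / (D - 1)) ^ (k + m) * (D * p * θ + (1 - p) * D / (D - 1)) := by
          ring
      _ = D * p * ((1 - p) * D / (D - 1)) ^ (k + m) := by rw [hDq]; ring
  rw [hden, hB]
  have h1D : 1 - 1 / D = (D - 1) / D := by field_simp
  rw [h1D, pow_add]
  simp only [div_pow, mul_pow, one_pow]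
  field_simp
end

section
/- Let d ≥ 2, p ∈ (1/d, 1), q = (d·p - 1)/(p·(d-1)), θ = q, α = 1/d. Then for every integer k with 0 ≤ k ≤ d, (1-θ)·α^k·(1-α)^{d-k} = (p·(1-q))^k·(1-p)^{d-k} / (d·p·q·(p·(1-q)+(1-p))^{d-1} + (p·(1-q)+(1-p))^{d}). -/
theorem stmt_15 (d : ℕ) (hd : 2 ≤ d) (p : ℝ) (hp : 1 / d < p) (hp1 : p < 1)
    (q θ α : ℝ) (hq : q = (d * p - 1) / (p * (d - 1))) (hθ : θ = q) (hα : α = 1 / d) :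
    ∀ k : ℕ, k ≤ d →
      (1 - θ) * α ^ k * (1 - α) ^ (d - k)
        = (p * (1 - q)) ^ k * (1 - p) ^ (d - k) /
            (d * p * q * (p * (1 - q) + (1 - p)) ^ (d - 1)
              + (p * (1 - q) + (1 - p)) ^ d) := by
  intro k hk
  have hd2 : (2:ℝ) ≤ (d:ℝ) := by exact_mod_cast hd
  have hd0 : (0:ℝ) < d := by linarith
  have hd1 : (0:ℝ) < (d:ℝ) - 1 := by linarith
  have hp0 : 0 < p := lt_trans (by positivity) hp
  have hq1 : 0 < 1 - p := by linarith
  obtain ⟨e, he⟩ : ∃ e, d = e + 1 := ⟨d - 1, by omega⟩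
  obtain ⟨m, hm1, hm2⟩ : ∃ m, d - k = m ∧ k + m = e + 1 := ⟨d - k, rfl, by omega⟩
  have he1 : d - 1 = e := by omega
  subst hα
  rw [hθ]
  rw [hm1, he1, show (p * (1 - q) + (1 - p)) ^ d
      = (p * (1 - q) + (1 - p)) ^ e * (p * (1 - q) + (1 - p)) from by rw [he, pow_succ]]
  have hB : p * (1 - q) = (1 - p) / ((d:ℝ) - 1) := by
    rw [hq]; field_simp; ring
  have hA : p * (1 - q) + (1 - p) = (1 - p) * d / ((d:ℝ) - 1) := by
    rw [hq]; field_simp; ring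
  have hD : (d:ℝ) * p * q * (p * (1 - q) + (1 - p)) ^ e
      + (p * (1 - q) + (1 - p)) ^ e * (p * (1 - q) + (1 - p))
      = ((1 - p) * d / ((d:ℝ) - 1)) ^ e * ((d:ℝ) * p) := by
    rw [hA, hq]; field_simp; ring
  have h1q : 1 - q = (1 - p) / (p * ((d:ℝ) - 1)) := by
    rw [hq]; field_simp; ring
  rw [hD, hB, h1q]
  have hpow : ((1 - p) * (d:ℝ) / ((d:ℝ) - 1)) ^ e
      = ((1 - p) * (d:ℝ) / ((d:ℝ) - 1)) ^ k * ((1 - p) * (d:ℝ) / ((d:ℝ) - 1)) ^ m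
        / ((1 - p) * (d:ℝ) / ((d:ℝ) - 1)) := by
    rw [← pow_add, hm2, pow_succ]
    field_simp
  rw [hpow]
  have hne : ((d:ℝ)) ≠ 0 := ne_of_gt hd0
  have hne1 : ((d:ℝ)) - 1 ≠ 0 := ne_of_gt hd1
  have hnep : p ≠ 0 := ne_of_gt hp0
  have hne1p : 1 - p ≠ 0 := ne_of_gt hq1
  rw [show (1:ℝ) - 1/(d:ℝ) = ((d:ℝ)-1)/d from by field_simp]
  simp only [div_pow, mul_pow, one_pow]
  field_simp
end

section
/- Let d ≥ 2 and p ∈ (0, 1/d]. Define K(n) by K(0) = 0 and K(n) = (1-p)/(d·p) + K(n-1)/(d·p), and q(n) = 1/(1+K(n)). Then q(n) → 0 as n → ∞. -/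
theorem stmt_18 (d : ℕ) (hd : 2 ≤ d) (p : ℝ) (hp : 0 < p) (hp1 : p ≤ 1 / d)
    (K q : ℕ → ℝ) (hK0 : K 0 = 0)
    (hK : ∀ n, K (n + 1) = (1 - p) / (d * p) + K n / (d * p))
    (hq : ∀ n, q n = 1 / (1 + K n)) :
    Filter.Tendsto q Filter.atTop (nhds 0) := by
  have hd0 : (0:ℝ) < d := by positivity
  have hdp : 0 < (d:ℝ) * p := by positivity
  have hdp1 : (d:ℝ) * p ≤ 1 := by
    have := mul_le_mul_of_nonneg_left hp1 hd0.le
    rw [mul_one_div, div_self hd0.ne'] at this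
    exact this
  have hp2 : p ≤ 1/2 := by
    calc p ≤ 1 / d := hp1
    _ ≤ 1/2 := by
      apply div_le_div_of_nonneg_left (by norm_num) (by norm_num)
      exact_mod_cast hd
  have hlow : ∀ n : ℕ, (n : ℝ) / 2 ≤ K n := by
    intro n
    induction n with
    | zero => simp [hK0]
    | succ n ih =>
      have hKn : 0 ≤ K n := le_trans (by positivity) ih
      have h1 : (1:ℝ)/2 ≤ (1 - p) / (d * p) := by
        calc (1:ℝ)/2 ≤ 1 - p := by linarith
        _ = (1 - p) / 1 := by ring
        _ ≤ (1 - p) / (d * p) := by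
          apply div_le_div_of_nonneg_left (by linarith) hdp hdp1
      have h2 : K n ≤ K n / (d * p) := by
        calc K n = K n / 1 := by ring
        _ ≤ K n / (d * p) := by
          apply div_le_div_of_nonneg_left hKn hdp hdp1
      have h2' : K n / 1 ≤ K n / (d * p) :=
        div_le_div_of_nonneg_left hKn hdp hdp1
      rw [hK n]
      push_cast
      linarith
  have hKtop : Filter.Tendsto K Filter.atTop Filter.atTop := by
    apply Filter.tendsto_atTop_mono hlow
    exact Filter.Tendsto.atTop_div_const (by norm_num) tendsto_natCast_atTop_atTop
  have : Filter.Tendsto (fun n => 1 + K n) Filter.atTop Filter.atTop :=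
    Filter.tendsto_atTop_add_const_left _ 1 hKtop
  have h := this.inv_tendsto_atTop
  have : q = fun n => (1 + K n)⁻¹ := by
    funext n; rw [hq n, one_div]
  rw [this]
  exact h
end
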